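/- For every simple graph G, the map sending a co-2-plex S of G to the set W ∪ F, where W is the set of vertices of S that are isolated in the induced subgraph G[S] and F is the set of edges of G[S], is a bijection between the co-2-plexes of G and the independent (stable) sets of the utter graph u(G). -/

import Mathlib

open SimpleGraph

universe u

variable {V : Type u}

/-- The clique number of a graph, as an extended natural number:
the supremum of the cardinalities of its (finite) cliques. -/
noncomputable def cliqueNumber (G : SimpleGraph V) : ℕ∞ :=
  ⨆ (t : Finset V) (_ : G.IsClique (t : Set V)), (t.card : ℕ∞)

/-- A graph is perfect if every induced subgraph has chromatic number equal
to its clique number. -/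
def IsPerfect (G : SimpleGraph V) : Prop :=
  ∀ s : Set V, (G.induce s).chromaticNumber = cliqueNumber (G.induce s)

/-- The contraction `G/F` of a set `F` of edges: vertices are the connected components
of the spanning subgraph `(V, F)`, two distinct components being adjacent iff `G` has
an edge between them. -/
def contractEdges (G : SimpleGraph V) (F : Set (Sym2 V)) :
    SimpleGraph (SimpleGraph.fromEdgeSet F).ConnectedComponent where
  Adj c d := c ≠ d ∧ ∃ x y : V,
      (SimpleGraph.fromEdgeSet F).connectedComponentMk x = c ∧
      (SimpleGraph.fromEdgeSet F).connectedComponentMk y = d ∧ G.Adj x y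
  symm := ⟨by
    rintro c d ⟨hne, x, y, hx, hy, hxy⟩
    exact ⟨hne.symm, y, x, hy, hx, hxy.symm⟩⟩
  loopless := ⟨fun c h => h.1 rfl⟩

/-- A graph is contraction perfect if the contraction of any set of its edges
yields a perfect graph. -/
def IsContractionPerfect (G : SimpleGraph V) : Prop :=
  ∀ F : Set (Sym2 V), F ⊆ G.edgeSet → IsPerfect (contractEdges G F)

/-- `G` contains a hole (induced cycle, `n ≥ 4`) on `n` vertices. -/
def HasHole (G : SimpleGraph V) (n : ℕ) : Prop :=
  4 ≤ n ∧ ∃ s : Set V, Nonempty (G.induce s ≃g cycleGraph n)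

/-- `G` contains an antihole (induced complement of a cycle, `n ≥ 4`) on `n` vertices. -/
def HasAntihole (G : SimpleGraph V) (n : ℕ) : Prop :=
  4 ≤ n ∧ ∃ s : Set V, Nonempty ((G.induce s)ᶜ ≃g cycleGraph n)

/-- `u`, `v` and `w 0, …, w (p-1)` (thought of as `w_1, …, w_p`) form an expanded antihole
in `G`: `uv` is an edge, the `w i` are distinct vertices different from `u` and `v`
inducing an antipath in this order, `u` is adjacent exactly to `w_2, …, w_{p-2}` among them,
and `v` is adjacent exactly to `w_3, …, w_{p-1}` among them. -/
def IsExpandedAntihole (G : SimpleGraph V) (u v : V) (p : ℕ) (w : Fin p → V) : Prop :=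
  6 ≤ p ∧ Even p ∧ G.Adj u v ∧ Function.Injective w ∧
  (∀ i, w i ≠ u) ∧ (∀ i, w i ≠ v) ∧
  (∀ i j, G.Adj (w i) (w j) ↔ (i ≠ j ∧ (i : ℕ) + 1 ≠ (j : ℕ) ∧ (j : ℕ) + 1 ≠ (i : ℕ))) ∧
  (∀ i, G.Adj u (w i) ↔ (1 ≤ (i : ℕ) ∧ (i : ℕ) ≤ p - 3)) ∧
  (∀ i, G.Adj v (w i) ↔ (2 ≤ (i : ℕ) ∧ (i : ℕ) ≤ p - 2))

/-- The contraction `G/uv` of a single edge `uv`: delete `u` and `v` and add a new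
vertex (here `none`) adjacent to every vertex of `N(u) ∪ N(v)`. -/
def contractOne (G : SimpleGraph V) (u v : V) :
    SimpleGraph (Option {x : V // x ≠ u ∧ x ≠ v}) where
  Adj a b :=
    match a, b with
    | some x, some y => G.Adj x.1 y.1
    | some x, none => G.Adj x.1 u ∨ G.Adj x.1 v
    | none, some y => G.Adj u y.1 ∨ G.Adj v y.1
    | none, none => False
  symm := ⟨by
    rintro (_ | x) (_ | y) h
    · exact h
    · exact h.imp (fun h' => h'.symm) (fun h' => h'.symm)
    · exact h.imp (fun h' => h'.symm) (fun h' => h'.symm)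
    · exact h.symm⟩
  loopless := ⟨by
    rintro (_ | x) h
    · exact h
    · exact G.loopless.irrefl _ h⟩

/-- The utter graph of `G`, on vertex set `V(G) ∪ E(G)`. -/
def utterGraph (G : SimpleGraph V) : SimpleGraph (V ⊕ G.edgeSet) where
  Adj a b :=
    match a, b with
    | Sum.inl x, Sum.inl y => G.Adj x y
    | Sum.inl x, Sum.inr e => x ∈ (e : Sym2 V) ∨ ∃ y ∈ (e : Sym2 V), G.Adj x y
    | Sum.inr e, Sum.inl x => x ∈ (e : Sym2 V) ∨ ∃ y ∈ (e : Sym2 V), G.Adj x y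
    | Sum.inr e, Sum.inr f => e ≠ f ∧
        ((∃ x, x ∈ (e : Sym2 V) ∧ x ∈ (f : Sym2 V)) ∨
          ∃ x ∈ (e : Sym2 V), ∃ y ∈ (f : Sym2 V), G.Adj x y)
  symm := ⟨by
    rintro (x | e) (y | f) h
    · exact h.symm
    · exact h
    · exact h
    · exact ⟨h.1.symm, h.2.imp (fun ⟨x, hx⟩ => ⟨x, hx.2, hx.1⟩)
        (fun ⟨x, hx, y, hy, hxy⟩ => ⟨y, hy, x, hx, hxy.symm⟩)⟩⟩
  loopless := ⟨by
    rintro (x | e) h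
    · exact G.loopless.irrefl _ h
    · exact h.1 rfl⟩

/-- A stable (independent) set: a set of pairwise nonadjacent vertices. -/
def IsStableSet (G : SimpleGraph V) (s : Set V) : Prop :=
  ∀ x ∈ s, ∀ y ∈ s, ¬G.Adj x y

/-- A co-2-plex: a set of vertices inducing a subgraph of maximum degree at most one. -/
def IsCo2Plex (G : SimpleGraph V) (S : Set V) : Prop :=
  ∀ x ∈ S, ∀ y ∈ S, ∀ z ∈ S, G.Adj x y → G.Adj x z → y = z

/-- The graph obtained from `G` by adding a true twin (`none`) of the vertex `v`. -/
def addTrueTwin (G : SimpleGraph V) (v : V) : SimpleGraph (Option V) where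
  Adj a b :=
    match a, b with
    | some x, some y => G.Adj x y
    | some x, none => x = v ∨ G.Adj x v
    | none, some y => y = v ∨ G.Adj y v
    | none, none => False
  symm := ⟨by rintro (_ | x) (_ | y) h <;> first | exact h | exact h.symm⟩
  loopless := ⟨by
    rintro (_ | x) h
    · exact h
    · exact G.loopless.irrefl _ h⟩

/-- The graph obtained from `G` by adding a false twin (`none`) of the vertex `v`. -/
def addFalseTwin (G : SimpleGraph V) (v : V) : SimpleGraph (Option V) where
  Adj a b :=
    match a, b with
    | some x, some y => G.Adj x y
    | some x, none => G.Adj x v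
    | none, some y => G.Adj y v
    | none, none => False
  symm := ⟨by rintro (_ | x) (_ | y) h <;> first | exact h | exact h.symm⟩
  loopless := ⟨by
    rintro (_ | x) h
    · exact h
    · exact G.loopless.irrefl _ h⟩

/-!
Each vertex of `u(G)` stands for a set of at most two vertices of `G`: a vertex `x` for `{x}`,
an edge for its two ends. Two distinct vertices of `u(G)` are adjacent exactly when these sets
meet or are joined by an edge of `G`. So a stable set `T` of `u(G)` is a family of vertices and
edges of `G` that are pairwise far apart: they are the connected components of the subgraph
induced by the vertices they cover, which is therefore a co-2-plex. Conversely, the components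
of `G[S]` for a co-2-plex `S` are its isolated vertices and its edges. Covering the vertices of
`T` inverts the map of the theorem.
-/

section Utter

variable {G : SimpleGraph V} {S : Set V} {T : Set (V ⊕ G.edgeSet)} {x y : V}

def utterVerts (G : SimpleGraph V) : V ⊕ G.edgeSet → Set V
  | Sum.inl x => {x}
  | Sum.inr e => {y | y ∈ (e : Sym2 V)}

def utterEncode (G : SimpleGraph V) (S : Set V) : Set (V ⊕ G.edgeSet) :=
  Sum.inl '' {x ∈ S | ∀ y ∈ S, ¬G.Adj x y} ∪
    Sum.inr '' {e : G.edgeSet | ∀ x ∈ (e : Sym2 V), x ∈ S}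

def utterDecode (G : SimpleGraph V) (T : Set (V ⊕ G.edgeSet)) : Set V :=
  ⋃ a ∈ T, utterVerts G a

@[simp]
lemma mem_utterVerts_inl {x' : V} : x ∈ utterVerts G (Sum.inl x') ↔ x = x' := Iff.rfl

@[simp]
lemma mem_utterVerts_inr {e : G.edgeSet} : x ∈ utterVerts G (Sum.inr e) ↔ x ∈ (e : Sym2 V) :=
  Iff.rfl

@[simp]
lemma inl_mem_utterEncode :
    (Sum.inl x : V ⊕ G.edgeSet) ∈ utterEncode G S ↔ x ∈ S ∧ ∀ y ∈ S, ¬G.Adj x y := by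
  simp [utterEncode]

@[simp]
lemma inr_mem_utterEncode {e : G.edgeSet} :
    Sum.inr e ∈ utterEncode G S ↔ ∀ x ∈ (e : Sym2 V), x ∈ S := by
  simp [utterEncode]

lemma mem_utterDecode : x ∈ utterDecode G T ↔ ∃ a ∈ T, x ∈ utterVerts G a := by
  simp [utterDecode]

lemma exists_adj_of_mem_edge (e : G.edgeSet) (hx : x ∈ (e : Sym2 V)) :
    ∃ y, G.Adj x y ∧ y ∈ (e : Sym2 V) ∧ (e : Sym2 V) = s(x, y) := by
  obtain ⟨y, hy⟩ := Sym2.mem_iff_exists.1 hx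
  exact ⟨y, G.mem_edgeSet.1 (hy ▸ e.2), hy ▸ Sym2.mem_mk_right x y, hy⟩

lemma utterVerts_eq_inr_of_adj {a : V ⊕ G.edgeSet} (hx : x ∈ utterVerts G a)
    (hy : y ∈ utterVerts G a) (hxy : G.Adj x y) : a = Sum.inr ⟨s(x, y), hxy⟩ := by
  rcases a with x' | e
  · simp only [mem_utterVerts_inl] at hx hy
    exact absurd (hx.trans hy.symm) hxy.ne
  · exact congrArg Sum.inr (Subtype.ext ((Sym2.mem_and_mem_iff hxy.ne).1 ⟨hx, hy⟩))

lemma isCo2Plex_utterVerts (a : V ⊕ G.edgeSet) : IsCo2Plex G (utterVerts G a) := by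
  intro x hx y hy z hz hxy hxz
  have h := (utterVerts_eq_inr_of_adj hx hy hxy).symm.trans (utterVerts_eq_inr_of_adj hx hz hxz)
  exact Sym2.congr_right.1 (congrArg Subtype.val (Sum.inr_injective h))

lemma utterGraph_adj {a b : V ⊕ G.edgeSet} :
    (utterGraph G).Adj a b ↔
      a ≠ b ∧ ∃ x ∈ utterVerts G a, ∃ y ∈ utterVerts G b, x = y ∨ G.Adj x y := by
  rcases a with x | e <;> rcases b with y | f <;>
    simp [utterGraph] <;> grind [SimpleGraph.Adj.ne, SimpleGraph.Adj.symm]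

lemma isStableSet_utterGraph_iff :
    IsStableSet (utterGraph G) T ↔ ∀ a ∈ T, ∀ b ∈ T, ∀ x ∈ utterVerts G a,
      ∀ y ∈ utterVerts G b, (x = y ∨ G.Adj x y) → a = b := by
  simp only [IsStableSet, utterGraph_adj]
  constructor
  · intro h a ha b hb x hx y hy hxy
    by_contra hne
    exact h a ha b hb ⟨hne, x, hx, y, hy, hxy⟩
  · rintro h a ha b hb ⟨hne, x, hx, y, hy, hxy⟩
    exact hne (h a ha b hb x hx y hy hxy)

lemma utterVerts_subset_of_mem_utterEncode {a : V ⊕ G.edgeSet} (ha : a ∈ utterEncode G S) :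
    utterVerts G a ⊆ S := by
  rcases a with x | e
  · rintro y rfl
    exact (inl_mem_utterEncode.1 ha).1
  · exact inr_mem_utterEncode.1 ha

lemma utterDecode_utterEncode (S : Set V) : utterDecode G (utterEncode G S) = S := by
  ext x
  refine ⟨fun hx => ?_, fun hx => ?_⟩
  · obtain ⟨a, ha, hxa⟩ := mem_utterDecode.1 hx
    exact utterVerts_subset_of_mem_utterEncode ha hxa
  · refine mem_utterDecode.2 ?_
    by_cases hiso : ∀ y ∈ S, ¬G.Adj x y
    · exact ⟨Sum.inl x, inl_mem_utterEncode.2 ⟨hx, hiso⟩, rfl⟩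
    · push Not at hiso
      obtain ⟨y, hy, hxy⟩ := hiso
      refine ⟨Sum.inr ⟨s(x, y), hxy⟩, inr_mem_utterEncode.2 ?_, Sym2.mem_mk_left x y⟩
      intro z hz
      rcases Sym2.mem_iff.1 hz with rfl | rfl <;> assumption

lemma utterVerts_subset_utterDecode {a : V ⊕ G.edgeSet} (ha : a ∈ T) :
    utterVerts G a ⊆ utterDecode G T :=
  Set.subset_biUnion_of_mem ha

lemma eq_inl_of_forall_not_adj {a : V ⊕ G.edgeSet} (hx : x ∈ utterVerts G a)
    (ha : utterVerts G a ⊆ S) (hiso : ∀ y ∈ S, ¬G.Adj x y) : a = Sum.inl x := by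
  rcases a with x' | e
  · exact congrArg Sum.inl hx.symm
  · obtain ⟨y, hxy, hy, -⟩ := exists_adj_of_mem_edge e hx
    exact absurd hxy (hiso y (ha hy))

lemma IsCo2Plex.mem_utterVerts_of_adj (hS : IsCo2Plex G S) {a : V ⊕ G.edgeSet}
    (ha : a ∈ utterEncode G S) (hx : x ∈ utterVerts G a) (hy : y ∈ S) (hxy : G.Adj x y) :
    y ∈ utterVerts G a := by
  rcases a with x' | e
  · obtain rfl : x = x' := hx
    exact absurd hxy ((inl_mem_utterEncode.1 ha).2 y hy)
  · have he := inr_mem_utterEncode.1 ha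
    obtain ⟨z, hxz, hz, -⟩ := exists_adj_of_mem_edge e hx
    rwa [hS x (he x hx) y hy z (he z hz) hxy hxz]

lemma IsCo2Plex.eq_of_mem_utterVerts (hS : IsCo2Plex G S) {a b : V ⊕ G.edgeSet}
    (ha : a ∈ utterEncode G S) (hb : b ∈ utterEncode G S) (hxa : x ∈ utterVerts G a)
    (hxb : x ∈ utterVerts G b) : a = b := by
  by_cases hiso : ∀ y ∈ S, ¬G.Adj x y
  · rw [eq_inl_of_forall_not_adj hxa (utterVerts_subset_of_mem_utterEncode ha) hiso,
      eq_inl_of_forall_not_adj hxb (utterVerts_subset_of_mem_utterEncode hb) hiso]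
  · push Not at hiso
    obtain ⟨y, hy, hxy⟩ := hiso
    rw [utterVerts_eq_inr_of_adj hxa (hS.mem_utterVerts_of_adj ha hxa hy hxy) hxy,
      utterVerts_eq_inr_of_adj hxb (hS.mem_utterVerts_of_adj hb hxb hy hxy) hxy]

lemma IsCo2Plex.isStableSet_utterEncode (hS : IsCo2Plex G S) :
    IsStableSet (utterGraph G) (utterEncode G S) := by
  refine isStableSet_utterGraph_iff.2 fun a ha b hb x hx y hy hxy => ?_
  rcases hxy with rfl | hxy
  · exact hS.eq_of_mem_utterVerts ha hb hx hy
  · have hyS := utterVerts_subset_of_mem_utterEncode hb hy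
    exact hS.eq_of_mem_utterVerts ha hb (hS.mem_utterVerts_of_adj ha hx hyS hxy) hy

lemma IsStableSet.isCo2Plex_utterDecode (hT : IsStableSet (utterGraph G) T) :
    IsCo2Plex G (utterDecode G T) := by
  have hT' := isStableSet_utterGraph_iff.1 hT
  intro x hx y hy z hz hxy hxz
  obtain ⟨a, ha, hxa⟩ := mem_utterDecode.1 hx
  obtain ⟨b, hb, hyb⟩ := mem_utterDecode.1 hy
  obtain ⟨c, hc, hzc⟩ := mem_utterDecode.1 hz
  obtain rfl := hT' a ha b hb x hxa y hyb (Or.inr hxy)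
  obtain rfl := hT' a ha c hc x hxa z hzc (Or.inr hxz)
  exact isCo2Plex_utterVerts a x hxa y hyb z hzc hxy hxz

lemma IsStableSet.utterEncode_utterDecode (hT : IsStableSet (utterGraph G) T) :
    utterEncode G (utterDecode G T) = T := by
  have hT' := isStableSet_utterGraph_iff.1 hT
  ext (x | e)
  · rw [inl_mem_utterEncode]
    refine ⟨fun ⟨hx, hiso⟩ => ?_, fun hxT => ⟨utterVerts_subset_utterDecode hxT rfl, ?_⟩⟩
    · obtain ⟨a, ha, hxa⟩ := mem_utterDecode.1 hx
      rwa [← eq_inl_of_forall_not_adj hxa (utterVerts_subset_utterDecode ha) hiso]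
    · intro y hy hxy
      obtain ⟨b, hb, hyb⟩ := mem_utterDecode.1 hy
      obtain rfl := hT' _ hxT b hb x rfl y hyb (Or.inr hxy)
      exact hxy.ne hyb.symm
  · rw [inr_mem_utterEncode]
    refine ⟨fun he => ?_, fun heT x hx => utterVerts_subset_utterDecode heT hx⟩
    obtain ⟨x, hx⟩ : ∃ x, x ∈ (e : Sym2 V) := ⟨_, Sym2.out_fst_mem _⟩
    obtain ⟨y, hxy, hy, hexy⟩ := exists_adj_of_mem_edge e hx
    obtain ⟨a, ha, hxa⟩ := mem_utterDecode.1 (he x hx)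
    obtain ⟨b, hb, hyb⟩ := mem_utterDecode.1 (he y hy)
    obtain rfl := hT' a ha b hb x hxa y hyb (Or.inr hxy)
    obtain rfl : e = ⟨s(x, y), hxy⟩ := Subtype.ext hexy
    rwa [utterVerts_eq_inr_of_adj hxa hyb hxy] at ha

end Utter

/-- The map sending a co-2-plex `S` of `G` to the union of the set of
isolated vertices of `G[S]` and the set of edges of `G[S]` is a bijection between
the co-2-plexes of `G` and the stable sets of the utter graph `u(G)`. -/
theorem co2plex_stable_bijection {V : Type u} (G : SimpleGraph V) :
    Set.BijOn
      (fun S : Set V =>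
        (Sum.inl '' {x ∈ S | ∀ y ∈ S, ¬G.Adj x y} : Set (V ⊕ G.edgeSet)) ∪
          Sum.inr '' {e : G.edgeSet | ∀ x ∈ (e : Sym2 V), x ∈ S})
      {S : Set V | IsCo2Plex G S}
      {T : Set (V ⊕ G.edgeSet) | IsStableSet (utterGraph G) T} :=
  Set.InvOn.bijOn (f' := utterDecode G)
    ⟨fun S _ => utterDecode_utterEncode S, fun _ hT => IsStableSet.utterEncode_utterDecode hT⟩
    (fun _ hS => IsCo2Plex.isStableSet_utterEncode hS)
    (fun _ hT => IsStableSet.isCo2Plex_utterDecode hT)
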